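/- Let w ∈ S_n be a minimal crowded permutation. Then every crowded subset of Row₂(P(w)) contains the largest element of Row₂(P(w)). -/

import Mathlib

/-- The value in position `j` (0-indexed) of the one-line notation of `w`,
extended by the identity outside the range `[0, n)`. -/
def entry {n : ℕ} (w : Equiv.Perm (Fin n)) (j : ℕ) : ℕ :=
  if h : j < n then (w ⟨j, h⟩ : ℕ) else j

/-- One-line notation of a permutation, as a list of natural numbers (0-indexed values). -/
def oneLine {n : ℕ} (w : Equiv.Perm (Fin n)) : List ℕ :=
  List.ofFn (fun i => (w i : ℕ))

/-- A permutation is fully commutative iff it avoids the pattern 321. -/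
def FullyCommutative {n : ℕ} (w : Equiv.Perm (Fin n)) : Prop :=
  ¬ ∃ i j k : Fin n, i < j ∧ j < k ∧ w k < w j ∧ w j < w i

/-- A permutation is boolean iff it avoids the patterns 321 and 3412. -/
def BooleanPerm {n : ℕ} (w : Equiv.Perm (Fin n)) : Prop :=
  FullyCommutative w ∧
    ¬ ∃ i j k l : Fin n, i < j ∧ j < k ∧ k < l ∧
        w k < w l ∧ w l < w i ∧ w i < w j

/-- The Coxeter length of a permutation: its number of inversions. -/
def invCount {n : ℕ} (w : Equiv.Perm (Fin n)) : ℕ :=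
  (Finset.univ.filter fun p : Fin n × Fin n => p.1 < p.2 ∧ w p.2 < w p.1).card

/-- The support of `w`: the set of (0-indexed) indices `i` such that the simple
transposition `s_i` appears in some (equivalently, every) reduced word of `w`;
equivalently, `{w(0),…,w(i)} ≠ {0,…,i}`, i.e. `max {w(j) : j ≤ i} > i`. -/
def Supp {n : ℕ} (w : Equiv.Perm (Fin n)) : Set ℕ :=
  {i | ∃ j : Fin n, (j : ℕ) ≤ i ∧ i < (w j : ℕ)}

/-- The simple transposition `s_i`, swapping positions `i` and `i+1` (0-indexed). -/
def simpleTr {n : ℕ} (i : ℕ) (h : i + 1 < n) : Equiv.Perm (Fin n) :=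
  Equiv.swap ⟨i, by omega⟩ ⟨i + 1, h⟩

/-- Schensted row insertion of a value into a tableau (a list of rows). -/
def rowInsert : List (List ℕ) → ℕ → List (List ℕ)
  | [], x => [[x]]
  | r :: rest, x =>
    match r.find? (fun y => decide (x < y)) with
    | none => (r ++ [x]) :: rest
    | some y => (r.map fun z => if z = y then x else z) :: rowInsert rest y

/-- RSK insertion tableau of a list. -/
def RSKList (l : List ℕ) : List (List ℕ) := l.foldl rowInsert []

/-- RSK insertion tableau `P(w)` of a permutation. -/
def RSKP {n : ℕ} (w : Equiv.Perm (Fin n)) : List (List ℕ) := RSKList (oneLine w)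

/-- RSK recording tableau `Q(w) = P(w⁻¹)`. -/
def RSKQ {n : ℕ} (w : Equiv.Perm (Fin n)) : List (List ℕ) := RSKP w⁻¹

/-- The set of entries in the first row of a tableau. -/
def Row1 (T : List (List ℕ)) : Finset ℕ := (T.getD 0 []).toFinset

/-- The set of entries in the second row of a tableau. -/
def Row2 (T : List (List ℕ)) : Finset ℕ := (T.getD 1 []).toFinset

/-- `BumpsAt l k z` : during the RSK insertion of the list `l`, the insertion of
the `(k+1)`-st letter of `l` bumps the value `z` from the first row to the
second row (`z` is the smallest first-row entry larger than the inserted letter). -/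
def BumpsAt (l : List ℕ) (k : ℕ) (z : ℕ) : Prop :=
  k < l.length ∧
    ((RSKList (l.take k)).getD 0 []).find? (fun y => decide (l.getD k 0 < y)) = some z

/-- `Bumps l b z` : during the RSK insertion of `l`, the value `b` bumps the
value `z` from the first row to the second row. -/
def Bumps (l : List ℕ) (b z : ℕ) : Prop :=
  ∃ k, l.getD k 0 = b ∧ BumpsAt l k z

/-- A finite set of naturals is crowded if some integer interval `[y, y+2x]`
(with `x > 0`) contains more than `x+1` of its elements. -/
def CrowdedSet (L : Finset ℕ) : Prop :=
  ∃ x y : ℤ, 0 < x ∧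
    x + 1 < ((L.filter fun a : ℕ => y ≤ (a : ℤ) ∧ (a : ℤ) ≤ y + 2 * x).card : ℤ)

/-- A fully commutative permutation is crowded if the second row of its RSK
insertion tableau is a crowded set. -/
def CrowdedPerm {n : ℕ} (w : Equiv.Perm (Fin n)) : Prop :=
  CrowdedSet (Row2 (RSKP w))

/-- Covering relation of the right weak order. -/
def RWCovers {n : ℕ} (u v : Equiv.Perm (Fin n)) : Prop :=
  ∃ i, ∃ h : i + 1 < n, v = u * simpleTr i h ∧ invCount v = invCount u + 1

/-- The right weak order on `S_n`. -/
def RightWeakLE {n : ℕ} : Equiv.Perm (Fin n) → Equiv.Perm (Fin n) → Prop :=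
  Relation.ReflTransGen RWCovers

/-- Covering relation of the left weak order. -/
def LWCovers {n : ℕ} (u v : Equiv.Perm (Fin n)) : Prop :=
  ∃ i, ∃ h : i + 1 < n, v = simpleTr i h * u ∧ invCount v = invCount u + 1

/-- The left weak order on `S_n`. -/
def LeftWeakLE {n : ℕ} : Equiv.Perm (Fin n) → Equiv.Perm (Fin n) → Prop :=
  Relation.ReflTransGen LWCovers

/-- A minimal crowded permutation: a crowded fully commutative permutation all of
whose strict predecessors (among fully commutative permutations) in the right
weak order are uncrowded. -/
def MinimalCrowded {n : ℕ} (w : Equiv.Perm (Fin n)) : Prop :=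
  FullyCommutative w ∧ CrowdedPerm w ∧
    ∀ v : Equiv.Perm (Fin n), FullyCommutative v → RightWeakLE v w → v ≠ w →
      ¬ CrowdedPerm v

/-- `l` is an increasing subsequence of the one-line notation of `w`. -/
def IncreasingSubseq {n : ℕ} (w : Equiv.Perm (Fin n)) (l : List ℕ) : Prop :=
  l.Sublist (oneLine w) ∧ l.Pairwise (· < ·)

/-- The length of a longest increasing subsequence of `w`. -/
noncomputable def lisLen {n : ℕ} (w : Equiv.Perm (Fin n)) : ℕ :=
  sSup {k | ∃ l : List ℕ, IncreasingSubseq w l ∧ l.length = k}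

/-- A consecutive occurrence of the pattern 415263 starting at (0-indexed) position `i`. -/
def Consec415263 {n : ℕ} (w : Equiv.Perm (Fin n)) (i : ℕ) : Prop :=
  i + 5 < n ∧
    entry w (i + 1) < entry w (i + 3) ∧ entry w (i + 3) < entry w (i + 5) ∧
    entry w (i + 5) < entry w i ∧ entry w i < entry w (i + 2) ∧
    entry w (i + 2) < entry w (i + 4)

/-- A consecutive occurrence of the pattern 315264 starting at (0-indexed) position `i`. -/
def Consec315264 {n : ℕ} (w : Equiv.Perm (Fin n)) (i : ℕ) : Prop :=
  i + 5 < n ∧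
    entry w (i + 1) < entry w (i + 3) ∧ entry w (i + 3) < entry w i ∧
    entry w i < entry w (i + 5) ∧ entry w (i + 5) < entry w (i + 2) ∧
    entry w (i + 2) < entry w (i + 4)

/-- An occurrence (not necessarily consecutive) of the pattern 415263 in `w`,
at positions `p 0 < p 1 < ⋯ < p 5`. -/
def Occ415263 {n : ℕ} (w : Equiv.Perm (Fin n)) (p : Fin 6 → Fin n) : Prop :=
  StrictMono p ∧
    w (p 1) < w (p 3) ∧ w (p 3) < w (p 5) ∧ w (p 5) < w (p 0) ∧
    w (p 0) < w (p 2) ∧ w (p 2) < w (p 4)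


/-!
Write the one-line notation of `w` as `u a c t` with `c < a` and `c t` increasing (the last
descent), and let `v = w s_p`, `p = |u|`, whose one-line notation is `u c a t`: it is fully
commutative and covered by `w`, hence uncrowded. As `w` avoids 321, every letter of `u` is
smaller than `a`, so `a` enters the first row of `P(u)` at its end. If `c` then bumps an entry
other than `a`, inserting `a c` or `c a` gives the same tableau. Otherwise `c` bumps `a` itself;
the first letter of `t` below `a` (if any) bumps `a` in `P(v)` as well and the tableaux coincide
from then on, while letters above `a` are just appended to the first row. In the remaining case
`P(w)` and `P(v)` differ only in that `a` sits at the end of row 2 of `P(w)`, above all of it,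
and in row 1 of `P(v)`. So a crowded subset of `Row₂(P(w))` missing its maximum would make `v`
crowded.
-/

section SimpleTransposition

variable {n p : ℕ} (hp : p + 1 < n)

lemma simpleTr_val (i : Fin n) :
    (simpleTr p hp i : ℕ) =
      if (i : ℕ) = p then p + 1 else if (i : ℕ) = p + 1 then p else i := by
  simp only [simpleTr, Equiv.swap_apply_def, Fin.ext_iff]
  split_ifs <;> simp_all

lemma simpleTr_lt_simpleTr {i j : Fin n} (hij : i < j)
    (hne : ¬ ((i : ℕ) = p ∧ (j : ℕ) = p + 1)) :
    simpleTr p hp i < simpleTr p hp j := by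
  rw [Fin.lt_def] at hij ⊢
  rw [simpleTr_val, simpleTr_val]
  split_ifs <;> omega

lemma invCount_mul_simpleTr {v : Equiv.Perm (Fin n)}
    (hasc : v ⟨p, by omega⟩ < v ⟨p + 1, hp⟩) :
    invCount (v * simpleTr p hp) = invCount v + 1 := by
  set σ := simpleTr p hp
  have hσσ : ∀ x, σ (σ x) = x := Equiv.swap_apply_self _ _
  have hreindex : invCount (v * σ) =
      (Finset.univ.filter fun q : Fin n × Fin n => σ q.1 < σ q.2 ∧ v q.2 < v q.1).card := by
    unfold invCount
    refine Finset.card_nbij' (fun q => (σ q.1, σ q.2)) (fun q => (σ q.1, σ q.2)) ?_ ?_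
      (fun q _ => by simp [hσσ]) (fun q _ => by simp [hσσ]) <;>
    · intro q hq
      rw [Finset.mem_coe, Finset.mem_filter] at hq ⊢
      simpa [hσσ] using hq
  have hinsert : (Finset.univ.filter fun q : Fin n × Fin n => σ q.1 < σ q.2 ∧ v q.2 < v q.1) =
      insert (⟨p + 1, hp⟩, ⟨p, by omega⟩)
        (Finset.univ.filter fun q : Fin n × Fin n => q.1 < q.2 ∧ v q.2 < v q.1) := by
    ext ⟨i, j⟩
    simp only [Finset.mem_filter, Finset.mem_univ, true_and, Finset.mem_insert, Prod.mk.injEq]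
    by_cases hQP : i = ⟨p + 1, hp⟩ ∧ j = ⟨p, by omega⟩
    · obtain ⟨rfl, rfl⟩ := hQP
      simp [σ, simpleTr, hasc, Fin.lt_def]
    by_cases hPQ : i = ⟨p, by omega⟩ ∧ j = ⟨p + 1, hp⟩
    · obtain ⟨rfl, rfl⟩ := hPQ
      simp [σ, simpleTr, hasc.not_gt, Fin.lt_def]
    have hord : σ i < σ j ↔ i < j := by
      simp only [Fin.ext_iff] at hQP hPQ
      rw [Fin.lt_def, Fin.lt_def, simpleTr_val, simpleTr_val]
      split_ifs <;> omega
    rw [hord, or_iff_right hQP]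
  rw [hreindex, hinsert, Finset.card_insert_of_notMem]
  · rfl
  · exact fun h => absurd (Finset.mem_filter.1 h).2.1 (by simp [Fin.lt_def])

lemma FullyCommutative.mul_simpleTr {w : Equiv.Perm (Fin n)} (hfc : FullyCommutative w)
    (hdesc : w ⟨p + 1, hp⟩ < w ⟨p, by omega⟩) : FullyCommutative (w * simpleTr p hp) := by
  have hnot : ∀ i j : Fin n, i = ⟨p, by omega⟩ → j = ⟨p + 1, hp⟩ →
      ¬ (w * simpleTr p hp) j < (w * simpleTr p hp) i := by
    rintro i j rfl rfl
    simpa [simpleTr] using hdesc.le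
  rintro ⟨i, j, k, hij, hjk, hkj, hji⟩
  exact hfc ⟨_, _, _,
    simpleTr_lt_simpleTr hp hij fun h => hnot i j (Fin.ext h.1) (Fin.ext h.2) hji,
    simpleTr_lt_simpleTr hp hjk fun h => hnot j k (Fin.ext h.1) (Fin.ext h.2) hkj, hkj, hji⟩

lemma rwCovers_mul_simpleTr {w : Equiv.Perm (Fin n)}
    (hdesc : w ⟨p + 1, hp⟩ < w ⟨p, by omega⟩) :
    RWCovers (w * simpleTr p hp) w := by
  have hinv : w * simpleTr p hp * simpleTr p hp = w := by simp [simpleTr, mul_assoc]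
  refine ⟨p, hp, hinv.symm, ?_⟩
  conv_lhs => rw [← hinv]
  exact invCount_mul_simpleTr hp (by simpa [simpleTr] using hdesc)

lemma mul_simpleTr_ne (w : Equiv.Perm (Fin n)) : w * simpleTr p hp ≠ w := by
  simp [simpleTr, Equiv.swap_eq_one_iff]

end SimpleTransposition

lemma exists_eq_append_cons_cons_of_not_pairwise_lt {α : Type*} [LinearOrder α] {l : List α}
    (hl : l.Nodup) (hns : ¬ l.Pairwise (· < ·)) :
    ∃ u a c t, l = u ++ a :: c :: t ∧ c < a ∧ (c :: t).Pairwise (· < ·) := by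
  induction l with
  | nil => simp at hns
  | cons x l ih =>
    by_cases hs : l.Pairwise (· < ·)
    · cases l with
      | nil => simp at hns
      | cons c t =>
        refine ⟨[], x, c, t, rfl, ?_, hs⟩
        obtain ⟨y, hy, hyx⟩ : ∃ y ∈ c :: t, ¬ x < y := by
          by_contra! h
          exact hns (List.pairwise_cons.2 ⟨h, hs⟩)
        have hcy : c ≤ y := by
          rcases List.mem_cons.1 hy with rfl | hy
          · exact le_rfl
          · exact (List.rel_of_pairwise_cons hs hy).le
        have hxc : x ≠ c := fun h => (List.nodup_cons.1 hl).1 (h ▸ List.mem_cons_self)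
        exact lt_of_le_of_ne (hcy.trans (not_lt.1 hyx)) hxc.symm
    · obtain ⟨u, a, c, t, rfl, hca, hct⟩ := ih hl.of_cons hs
      exact ⟨x :: u, a, c, t, rfl, hca, hct⟩

section OneLine

variable {n : ℕ}

lemma oneLine_nodup (w : Equiv.Perm (Fin n)) : (oneLine w).Nodup :=
  List.nodup_ofFn.2 (Fin.val_injective.comp w.injective)

lemma length_of_oneLine_eq {w : Equiv.Perm (Fin n)} {u t : List ℕ} {a c : ℕ}
    (hw : oneLine w = u ++ a :: c :: t) : u.length + t.length + 2 = n := by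
  have := congrArg List.length hw
  simp only [oneLine, List.length_ofFn, List.length_append, List.length_cons] at this
  omega

lemma val_apply_of_oneLine_eq {w : Equiv.Perm (Fin n)} {l : List ℕ} (hw : oneLine w = l)
    (j : ℕ) (hj : j < n) : (w ⟨j, hj⟩ : ℕ) = l[j]'(by simp [← hw, oneLine, hj]) := by
  subst hw
  simp [oneLine]

lemma oneLine_mul_simpleTr {w : Equiv.Perm (Fin n)} {u t : List ℕ} {a c : ℕ}
    (hw : oneLine w = u ++ a :: c :: t) (hp : u.length + 1 < n) :
    oneLine (w * simpleTr u.length hp) = u ++ c :: a :: t := by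
  have hlen := length_of_oneLine_eq hw
  apply List.ext_getElem (by simp [oneLine]; omega)
  intro i hi _
  simp only [oneLine, List.getElem_ofFn, Equiv.Perm.mul_apply]
  rw [val_apply_of_oneLine_eq hw]
  simp only [simpleTr_val, List.getElem_append, List.getElem_cons]
  split_ifs <;> omega

lemma FullyCommutative.forall_lt_of_oneLine_eq {w : Equiv.Perm (Fin n)}
    (hfc : FullyCommutative w) {u t : List ℕ} {a c : ℕ} (hw : oneLine w = u ++ a :: c :: t)
    (hca : c < a) : ∀ g ∈ u, g < a := by
  have hlen := length_of_oneLine_eq hw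
  intro g hg
  obtain ⟨i, hi, rfl⟩ := List.getElem_of_mem hg
  have hwi := val_apply_of_oneLine_eq hw i (by omega)
  have hwp := val_apply_of_oneLine_eq hw u.length (by omega)
  have hwq := val_apply_of_oneLine_eq hw (u.length + 1) (by omega)
  simp only [List.getElem_append_left hi, List.getElem_append_right (Nat.le_refl _),
    List.getElem_append_right (Nat.le_add_right u.length 1), Nat.sub_self,
    Nat.add_sub_cancel_left, List.getElem_cons_zero, List.getElem_cons_succ] at hwi hwp hwq
  by_contra hge
  have hne : u[i] ≠ a := fun h => by
    have := w.injective (Fin.ext (hwi.trans (h.trans hwp.symm)))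
    simp only [Fin.mk.injEq] at this
    omega
  exact hfc ⟨⟨i, by omega⟩, ⟨u.length, by omega⟩, ⟨u.length + 1, by omega⟩,
    Fin.mk_lt_mk.2 hi, Fin.mk_lt_mk.2 (Nat.lt_succ_self _),
    by rw [Fin.lt_def, hwq, hwp]; exact hca, by rw [Fin.lt_def, hwp, hwi]; omega⟩

end OneLine

lemma rowInsert_nil (x : ℕ) : rowInsert [] x = rowInsert [[]] x := by
  simp [rowInsert]

lemma rowInsert_of_forall_lt {r : List ℕ} {R : List (List ℕ)} {x : ℕ}
    (h : ∀ g ∈ r, g < x) :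
    rowInsert (r :: R) x = (r ++ [x]) :: R := by
  have : r.find? (fun y => decide (x < y)) = none :=
    List.find?_eq_none.2 fun g hg => by simpa using (h g hg).le
  simp [rowInsert, this]

lemma rowInsert_append_singleton_of_le {r : List ℕ} {R : List (List ℕ)} {y a : ℕ}
    (hr : ∀ g ∈ r, g ≤ y) (hya : y < a) :
    rowInsert ((r ++ [a]) :: R) y = (r ++ [y]) :: rowInsert R a := by
  have hfind : (r ++ [a]).find? (fun z => decide (y < z)) = some a := by
    rw [List.find?_append, List.find?_eq_none.2 fun g hg => by simpa using hr g hg]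
    simp [hya]
  have hmap : r.map (fun z => if z = a then y else z) = r :=
    (List.map_congr_left fun z hz => if_neg ((hr z hz).trans_lt hya).ne).trans (List.map_id r)
  simp [rowInsert, hfind, hmap]

lemma foldl_rowInsert_of_pairwise {t : List ℕ} (ht : t.Pairwise (· < ·)) {r : List ℕ}
    {R : List (List ℕ)} (hrt : ∀ g ∈ r, ∀ x ∈ t, g < x) :
    t.foldl rowInsert (r :: R) = (r ++ t) :: R := by
  induction t generalizing r with
  | nil => simp
  | cons x t ih =>
    rw [List.foldl_cons, rowInsert_of_forall_lt fun g hg => hrt g hg x (by simp)]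
    rw [ih ht.of_cons]
    · simp
    · intro g hg y hy
      rcases List.mem_append.1 hg with hg | hg
      · exact hrt g hg y (by simp [hy])
      · rw [List.mem_singleton.1 hg]; exact List.rel_of_pairwise_cons ht hy

lemma flatten_rowInsert_subset (T : List (List ℕ)) (x : ℕ) :
    (rowInsert T x).flatten ⊆ x :: T.flatten := by
  induction T generalizing x with
  | nil => simp [rowInsert]
  | cons r R ih =>
    cases h : r.find? (fun y => decide (x < y)) with
    | none => intro g; simp [rowInsert, h]; tauto
    | some y =>
      have hy : y ∈ r := List.mem_of_find?_eq_some h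
      intro g hg
      simp only [rowInsert, h, List.flatten_cons, List.mem_append, List.mem_map] at hg
      rcases hg with ⟨z, hz, rfl⟩ | hg
      · split_ifs <;> simp_all
      · rcases List.mem_cons.1 (ih y hg) with rfl | hg <;> simp_all

lemma flatten_RSKList_subset (l : List ℕ) : (RSKList l).flatten ⊆ l := by
  induction l using List.reverseRecOn with
  | nil => simp [RSKList]
  | append_singleton l x ih =>
    rw [RSKList, List.foldl_append, ← RSKList, List.foldl_cons, List.foldl_nil]
    intro g hg
    rcases List.mem_cons.1 (flatten_rowInsert_subset _ x hg) with rfl | hg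
    · simp
    · exact List.mem_append_left _ (ih hg)

lemma row2_RSKList_of_pairwise {l : List ℕ} (hl : l.Pairwise (· < ·)) :
    Row2 (RSKList l) = ∅ := by
  cases l with
  | nil => simp [RSKList, Row2]
  | cons x t =>
    rw [RSKList, List.foldl_cons, rowInsert_nil, rowInsert_of_forall_lt (by simp),
      foldl_rowInsert_of_pairwise hl.of_cons
        (by simpa using fun y hy => List.rel_of_pairwise_cons hl hy)]
    simp [Row2]

lemma foldl_rowInsert_after_bump {q : List ℕ} {R : List (List ℕ)} {a c : ℕ} {t : List ℕ}
    (hq : ∀ g ∈ q, g ≤ c) (hca : c < a) (ht : (c :: t).Pairwise (· < ·)) (hat : a ∉ t) :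
    t.foldl rowInsert (q :: rowInsert R a) = t.foldl rowInsert ((q ++ [a]) :: R) ∨
      ∃ q₁ q₂, t.foldl rowInsert (q :: rowInsert R a) = q₁ :: rowInsert R a ∧
        t.foldl rowInsert ((q ++ [a]) :: R) = q₂ :: R := by
  cases t with
  | nil => exact Or.inr ⟨_, _, rfl, rfl⟩
  | cons x t =>
    have hct : ∀ y ∈ x :: t, c < y := fun y hy => List.rel_of_pairwise_cons ht hy
    have hcx : c < x := hct x List.mem_cons_self
    rcases lt_or_gt_of_ne (show x ≠ a by rintro rfl; simp at hat) with hxa | hax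
    · left
      rw [List.foldl_cons, List.foldl_cons,
        rowInsert_append_singleton_of_le (fun g hg => (hq g hg).trans hcx.le) hxa,
        rowInsert_of_forall_lt fun g hg => (hq g hg).trans_lt hcx]
    · right
      have hxt : ∀ y ∈ x :: t, x ≤ y := by
        simpa using fun y hy => (List.rel_of_pairwise_cons ht.of_cons hy).le
      refine ⟨_, _, foldl_rowInsert_of_pairwise ht.of_cons ?_,
        foldl_rowInsert_of_pairwise ht.of_cons ?_⟩
      · exact fun g hg y hy => (hq g hg).trans_lt (hct y hy)
      · intro g hg y hy
        rcases List.mem_append.1 hg with hg | hg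
        · exact (hq g hg).trans_lt (hct y hy)
        · rw [List.mem_singleton.1 hg]; exact hax.trans_le (hxt y hy)

lemma foldl_rowInsert_swap {r : List ℕ} {R : List (List ℕ)} {a c : ℕ} {t : List ℕ}
    (hT : ∀ g ∈ (r :: R).flatten, g < a) (hca : c < a) (ht : (c :: t).Pairwise (· < ·))
    (hat : a ∉ t) :
    (a :: c :: t).foldl rowInsert (r :: R) = (c :: a :: t).foldl rowInsert (r :: R) ∨
      ∃ q₁ q₂, (a :: c :: t).foldl rowInsert (r :: R) = q₁ :: rowInsert R a ∧
        (c :: a :: t).foldl rowInsert (r :: R) = q₂ :: R := by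
  have hr : ∀ g ∈ r, g < a := fun g hg => hT g (by simp [hg])
  simp only [List.foldl_cons, rowInsert_of_forall_lt hr]
  cases hγ : r.find? (fun y => decide (c < y)) with
  | some γ =>
    have hγa : γ ≠ a := (hr γ (List.mem_of_find?_eq_some hγ)).ne
    have hfind : (r ++ [a]).find? (fun y => decide (c < y)) = some γ := by
      rw [List.find?_append, hγ]; rfl
    have hbelow : ∀ g ∈ r.map (fun z => if z = γ then c else z), g < a := by
      simp only [List.mem_map]
      rintro g ⟨z, hz, rfl⟩
      split_ifs
      · exact hca
      · exact hr z hz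
    left
    simp only [rowInsert, hfind, hγ, rowInsert_of_forall_lt hbelow, List.map_append,
      List.map_singleton, if_neg hγa.symm]
  | none =>
    have hrc : ∀ g ∈ r, g ≤ c := fun g hg => by simpa using List.find?_eq_none.1 hγ g hg
    have hrc' : ∀ g ∈ r ++ [c], g ≤ c := fun g hg =>
      (List.mem_append.1 hg).elim (hrc g) fun h => (List.mem_singleton.1 h).le
    have hv : rowInsert (r :: R) c = (r ++ [c]) :: R := by simp [rowInsert, hγ]
    rw [rowInsert_append_singleton_of_le hrc hca, hv,
      rowInsert_of_forall_lt fun g hg => (hrc' g hg).trans_lt hca]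
    exact foldl_rowInsert_after_bump hrc' hca ht hat

lemma row2_cons_rowInsert {q₁ q₂ : List ℕ} {R : List (List ℕ)} {a : ℕ}
    (hR : ∀ g ∈ Row2 (q₂ :: R), g < a) :
    Row2 (q₁ :: rowInsert R a) = insert a (Row2 (q₂ :: R)) := by
  cases R with
  | nil => simp [Row2, rowInsert]
  | cons ρ R =>
    rw [rowInsert_of_forall_lt fun g hg => hR g (by simpa [Row2] using hg)]
    ext; simp [Row2]

lemma isGreatest_row2_RSKList_of_notMem_swap {u t : List ℕ} {a c : ℕ} (hu : ∀ g ∈ u, g < a)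
    (hca : c < a) (ht : (c :: t).Pairwise (· < ·)) (hat : a ∉ t) :
    ∀ g ∈ Row2 (RSKList (u ++ a :: c :: t)), g ∉ Row2 (RSKList (u ++ c :: a :: t)) →
      IsGreatest (Row2 (RSKList (u ++ a :: c :: t)) : Set ℕ) g := by
  have hRSK : ∀ l, RSKList (u ++ l) = l.foldl rowInsert (RSKList u) :=
    fun l => List.foldl_append
  obtain ⟨r, R, hT, hfold⟩ : ∃ r R, (∀ g ∈ (r :: R).flatten, g < a) ∧
      ∀ x l, (x :: l).foldl rowInsert (RSKList u) = (x :: l).foldl rowInsert (r :: R) := by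
    cases h : RSKList u with
    | nil => exact ⟨[], [], by simp, fun x l => by rw [List.foldl_cons, rowInsert_nil]; rfl⟩
    | cons r R =>
      exact ⟨r, R, fun g hg => hu g (flatten_RSKList_subset u (h ▸ hg)), fun _ _ => rfl⟩
  rw [hRSK, hRSK, hfold, hfold]
  rcases foldl_rowInsert_swap hT hca ht hat with h | ⟨q₁, q₂, hw, hv⟩
  · rw [h]
    exact fun g hg hg' => absurd hg hg'
  · have hlt : ∀ g ∈ Row2 (q₂ :: R), g < a := by
      cases R with
      | nil => simp [Row2]
      | cons ρ R => exact fun g hg => hT g (by simp_all [Row2])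
    rw [hw, hv, row2_cons_rowInsert hlt]
    intro g hg hg'
    obtain rfl : g = a := (Finset.mem_insert.1 hg).resolve_right hg'
    refine ⟨hg, fun y hy => ?_⟩
    rcases Finset.mem_insert.1 hy with rfl | hy
    · exact le_rfl
    · exact (hlt y hy).le

lemma CrowdedSet.mono {S L : Finset ℕ} (hS : CrowdedSet S) (h : S ⊆ L) : CrowdedSet L := by
  obtain ⟨x, y, hx, hcard⟩ := hS
  exact ⟨x, y, hx, hcard.trans_le <| by
    exact_mod_cast Finset.card_le_card (Finset.filter_subset_filter _ h)⟩

/-- **Lemma.** If `w` is a minimal crowded permutation, then every crowded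
subset of `Row₂(P(w))` contains the largest element of `Row₂(P(w))`. -/
theorem minimal_crowded_max_element {n : ℕ} (w : Equiv.Perm (Fin n))
    (hmin : MinimalCrowded w) :
    ∀ S : Finset ℕ, S ⊆ Row2 (RSKP w) → CrowdedSet S →
      ∀ zmax ∈ Row2 (RSKP w), (∀ y ∈ Row2 (RSKP w), y ≤ zmax) → zmax ∈ S := by
  intro S hSw hS zmax hzmax hzmax_ge
  obtain ⟨hfc, -, hminimal⟩ := hmin
  by_contra hzS
  have hunsorted : ¬ (oneLine w).Pairwise (· < ·) := fun h => by
    rw [RSKP, row2_RSKList_of_pairwise h] at hzmax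
    exact Finset.notMem_empty _ hzmax
  obtain ⟨u, a, c, t, hw, hca, hct⟩ :=
    exists_eq_append_cons_cons_of_not_pairwise_lt (oneLine_nodup w) hunsorted
  have hp : u.length + 1 < n := by
    have := length_of_oneLine_eq hw
    omega
  have hdesc : w ⟨u.length + 1, hp⟩ < w ⟨u.length, by omega⟩ := by
    rw [Fin.lt_def, val_apply_of_oneLine_eq hw, val_apply_of_oneLine_eq hw]
    simpa using hca
  have hat : a ∉ t := fun hat => by
    have hnd : (a :: c :: t).Nodup := (hw ▸ oneLine_nodup w).of_append_right
    exact (List.nodup_cons.1 hnd).1 (List.mem_cons_of_mem c hat)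
  refine hminimal _ (hfc.mul_simpleTr hp hdesc) (.single (rwCovers_mul_simpleTr hp hdesc))
    (mul_simpleTr_ne hp w) (hS.mono fun s hs => ?_)
  have hrow := isGreatest_row2_RSKList_of_notMem_swap
    (hfc.forall_lt_of_oneLine_eq hw hca) hca hct hat
  rw [RSKP, hw] at hSw hzmax hzmax_ge
  rw [RSKP, oneLine_mul_simpleTr hw hp]
  by_contra hsv
  obtain rfl : s = zmax := le_antisymm (hzmax_ge s (hSw hs)) ((hrow s (hSw hs) hsv).2 hzmax)
  exact hzS hs
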